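/- arXiv:1709.09274 — 2 statements merged into one kernel-verified Lean document; each statement's English description precedes it below -/
import Mathlib

section
/- Pinsker's inequality (finite form): for any two probability mass functions P and Q on a finite set X, the total variation distance satisfies sup_{A ⊆ X} |P(A) − Q(A)| ≤ sqrt( D_KL(P‖Q) / 2 ). -/
/-!
The log-sum inequality (Jensen's inequality for `x ↦ x log x`) shows that merging the points of
`A` and of `Aᶜ` can only decrease the divergence, so `D(P‖Q)` dominates the divergence between the
two-point distributions `(P(A), 1 - P(A))` and `(Q(A), 1 - Q(A))`. For these, Pinsker's inequality
`2 (p - q)² ≤ p log (p/q) + (1 - p) log ((1 - p)/(1 - q))` follows by fixing `p` and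
differentiating in `q`: the difference of the two sides vanishes at `q = p` and has derivative
`(q - p) (1 - 2q)² / (q (1 - q))`, which has the sign of `q - p`.
-/

open Real

namespace Finset

variable {ι : Type*} (s : Finset ι) {a b : ι → ℝ}

theorem sum_mul_log_div_sum_le_of_pos (ha : ∀ i ∈ s, 0 ≤ a i) (hb : ∀ i ∈ s, 0 < b i) :
    (∑ i ∈ s, a i) * log ((∑ i ∈ s, a i) / ∑ i ∈ s, b i) ≤ ∑ i ∈ s, a i * log (a i / b i) := by
  rcases s.eq_empty_or_nonempty with rfl | hs
  · simp
  set B := ∑ i ∈ s, b i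
  have hB : 0 < B := sum_pos hb hs
  have hweight : ∀ i ∈ s, b i / B * (a i / b i) = a i / B := fun i hi ↦ by
    field_simp [(hb i hi).ne']
  have hmean : ∑ i ∈ s, b i / B * (a i / b i) = (∑ i ∈ s, a i) / B := by
    rw [sum_congr rfl hweight, sum_div]
  have hrhs : ∑ i ∈ s, b i / B * (a i / b i * log (a i / b i)) =
      (∑ i ∈ s, a i * log (a i / b i)) / B := by
    rw [sum_div]
    exact sum_congr rfl fun i hi ↦ by rw [← mul_assoc, hweight i hi, div_mul_eq_mul_div]
  -- Jensen for `x ↦ x log x` at the points `a i / b i`, weighted by `b i / B`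
  have jensen := convexOn_mul_log.map_sum_le (t := s) (w := fun i ↦ b i / B)
    (p := fun i ↦ a i / b i) (fun i hi ↦ div_nonneg (hb i hi).le hB.le)
    (by rw [← sum_div, div_self hB.ne'])
    (fun i hi ↦ Set.mem_Ici.2 (div_nonneg (ha i hi) (hb i hi).le))
  simp only [smul_eq_mul, hmean, hrhs] at jensen
  rwa [div_mul_eq_mul_div, div_le_div_iff_of_pos_right hB] at jensen

theorem sum_mul_log_div_sum_le (ha : ∀ i ∈ s, 0 ≤ a i) (hb : ∀ i ∈ s, 0 ≤ b i)
    (hab : ∀ i ∈ s, 0 < a i → 0 < b i) :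
    (∑ i ∈ s, a i) * log ((∑ i ∈ s, a i) / ∑ i ∈ s, b i) ≤ ∑ i ∈ s, a i * log (a i / b i) := by
  classical
  set t := s.filter (fun i ↦ 0 < a i)
  have hts : t ⊆ s := filter_subset _ _
  have hsum_a : ∑ i ∈ t, a i = ∑ i ∈ s, a i :=
    sum_filter_of_ne fun i hi hne ↦ (ha i hi).lt_of_ne' hne
  have hsum_kl : ∑ i ∈ t, a i * log (a i / b i) = ∑ i ∈ s, a i * log (a i / b i) :=
    sum_filter_of_ne fun i hi hne ↦ (ha i hi).lt_of_ne' (left_ne_zero_of_mul hne)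
  have ht : ∀ i ∈ t, 0 < a i := fun i hi ↦ (mem_filter.1 hi).2
  have hbt : ∀ i ∈ t, 0 < b i := fun i hi ↦ hab i (hts hi) (ht i hi)
  have hlogsum := t.sum_mul_log_div_sum_le_of_pos (fun i hi ↦ (ht i hi).le) hbt
  rw [hsum_a, hsum_kl] at hlogsum
  rcases (sum_nonneg ha).eq_or_lt with hA | hA
  · simpa [← hA] using hlogsum
  have hBt : 0 < ∑ i ∈ t, b i :=
    sum_pos hbt (nonempty_of_sum_ne_zero (hsum_a ▸ hA.ne'))
  have hBts : ∑ i ∈ t, b i ≤ ∑ i ∈ s, b i :=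
    sum_le_sum_of_subset_of_nonneg hts fun i hi _ ↦ hb i hi
  refine le_trans (mul_le_mul_of_nonneg_left ?_ hA.le) hlogsum
  exact log_le_log (div_pos hA (hBt.trans_le hBts)) (div_le_div_of_nonneg_left hA.le hBt hBts)

end Finset

section BinaryKL

open Set

/-- Since `log 0 = 0`, the terms with `p = 0` or `p = 1` vanish, as with the convention
`0 log 0 = 0`. -/
noncomputable def binaryKL (p q : ℝ) : ℝ :=
  p * log (p / q) + (1 - p) * log ((1 - p) / (1 - q))

@[simp] theorem binaryKL_self (p : ℝ) : binaryKL p p = 0 := by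
  simp [binaryKL]

theorem binaryKL_one_sub (p q : ℝ) : binaryKL (1 - p) (1 - q) = binaryKL p q := by
  simp only [binaryKL, sub_sub_cancel]
  ring

theorem mul_log_div_eq {p t : ℝ} (ht : t ≠ 0) : p * log (p / t) = p * (log p - log t) := by
  rcases eq_or_ne p 0 with rfl | hp
  · simp
  · rw [log_div hp ht]

theorem hasDerivAt_binaryKL {p t : ℝ} (ht0 : 0 < t) (ht1 : t < 1) :
    HasDerivAt (binaryKL p) (-(p / t) + (1 - p) / (1 - t)) t := by
  have hlog : HasDerivAt (fun s ↦ p * (log p - log s) + (1 - p) * (log (1 - p) - log (1 - s)))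
      (p * -t⁻¹ + (1 - p) * -((1 - t)⁻¹ * -1)) t := by
    have h1 : HasDerivAt (fun s : ℝ ↦ 1 - s) (-1) t := by
      simpa using (hasDerivAt_id t).const_sub 1
    exact (((hasDerivAt_log ht0.ne').const_sub _).const_mul p).add
      ((((hasDerivAt_log (sub_ne_zero.2 ht1.ne')).comp t h1).const_sub _).const_mul (1 - p))
  have heq : binaryKL p =ᶠ[nhds t]
      fun s ↦ p * (log p - log s) + (1 - p) * (log (1 - p) - log (1 - s)) := by
    filter_upwards [Ioo_mem_nhds ht0 ht1] with s hs
    rw [binaryKL, mul_log_div_eq hs.1.ne', mul_log_div_eq (sub_ne_zero.2 hs.2.ne')]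
  refine (hlog.congr_of_eventuallyEq heq).congr_deriv ?_
  field_simp

theorem continuousOn_binaryKL {p : ℝ} (hp : 0 ≤ p) : ContinuousOn (binaryKL p) (Ico p 1) := by
  rcases hp.eq_or_lt with rfl | hp
  · have : binaryKL 0 = fun t ↦ log (1 / (1 - t)) := by
      ext t; simp [binaryKL]
    rw [this]
    exact ContinuousOn.log (by fun_prop (disch := exact fun t ht ↦ sub_ne_zero.2 ht.2.ne'))
      fun t ht ↦ (one_div_pos.2 (sub_pos.2 ht.2)).ne'
  · intro t ht
    exact (hasDerivAt_binaryKL (hp.trans_le ht.1) ht.2).continuousAt.continuousWithinAt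

theorem monotoneOn_binaryKL_sub_sq {p : ℝ} (hp : 0 ≤ p) :
    MonotoneOn (fun t ↦ binaryKL p t - 2 * (p - t) ^ 2) (Ico p 1) := by
  refine monotoneOn_of_hasDerivWithinAt_nonneg (convex_Ico p 1)
    ((continuousOn_binaryKL hp).sub (by fun_prop))
    (f' := fun t ↦ (t - p) * (1 - 2 * t) ^ 2 / (t * (1 - t)))
    (fun t ht ↦ ?_) (fun t ht ↦ ?_) <;> rw [interior_Ico] at ht
  · have ht0 : 0 < t := hp.trans_lt ht.1
    have ht1 : 0 < 1 - t := sub_pos.2 ht.2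
    have hsq : HasDerivAt (fun s ↦ 2 * (p - s) ^ 2) (2 * (2 * (p - t) ^ 1 * -1)) t :=
      (((hasDerivAt_id t).const_sub p).pow 2).const_mul 2
    refine ((hasDerivAt_binaryKL ht0 ht.2).sub hsq).hasDerivWithinAt.congr_deriv ?_
    field_simp
    ring
  · exact div_nonneg (mul_nonneg (sub_nonneg.2 ht.1.le) (sq_nonneg _))
      (mul_pos (hp.trans_lt ht.1) (sub_pos.2 ht.2)).le

theorem two_mul_sq_le_binaryKL_of_le {p q : ℝ} (hp : 0 ≤ p) (hpq : p ≤ q) (hq : q < 1) :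
    2 * (p - q) ^ 2 ≤ binaryKL p q := by
  have := monotoneOn_binaryKL_sub_sq hp ⟨le_rfl, hpq.trans_lt hq⟩ ⟨hpq, hq⟩ hpq
  simp only [binaryKL_self, sub_self] at this
  linarith

theorem two_mul_sq_le_binaryKL {p q : ℝ} (hp0 : 0 ≤ p) (hp1 : p ≤ 1) (hq0 : 0 ≤ q) (hq1 : q ≤ 1)
    (h0 : 0 < p → 0 < q) (h1 : p < 1 → q < 1) :
    2 * (p - q) ^ 2 ≤ binaryKL p q := by
  rcases le_or_gt p q with hpq | hqp
  · rcases hq1.lt_or_eq with hq | rfl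
    · exact two_mul_sq_le_binaryKL_of_le hp0 hpq hq
    · obtain rfl : p = 1 := hp1.antisymm (not_lt.1 fun hp ↦ (h1 hp).false)
      simp
  · have := two_mul_sq_le_binaryKL_of_le (sub_nonneg.2 hp1) (sub_le_sub_left hqp.le 1)
      (sub_lt_self 1 (h0 (hq0.trans_lt hqp)))
    rwa [binaryKL_one_sub, sub_sub_sub_cancel_left, ← neg_sub, neg_sq] at this

end BinaryKL

/-- **Pinsker's inequality (finite form).** For any two probability mass functions
`P` and `Q` on a finite set `X` (with `Q x > 0` whenever `P x > 0`), the total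
variation distance satisfies `sup_{A ⊆ X} |P(A) − Q(A)| ≤ sqrt(D_KL(P‖Q) / 2)`,
where `D_KL(P‖Q) = Σ_{x : P x > 0} P x * log (P x / Q x)`. -/
theorem pinsker_inequality_finite {X : Type*} [Fintype X] (P Q : X → ℝ)
    (hP0 : ∀ x, 0 ≤ P x) (hQ0 : ∀ x, 0 ≤ Q x)
    (hP1 : ∑ x, P x = 1) (hQ1 : ∑ x, Q x = 1)
    (hac : ∀ x, 0 < P x → 0 < Q x) :
    ∀ A : Finset X,
      |(∑ x ∈ A, P x) - (∑ x ∈ A, Q x)| ≤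
        Real.sqrt
          ((∑ x ∈ Finset.univ.filter (fun x => 0 < P x),
              P x * Real.log (P x / Q x)) / 2) := by
  classical
  intro A
  set p := ∑ x ∈ A, P x
  set q := ∑ x ∈ A, Q x
  have hPc : ∑ x ∈ Aᶜ, P x = 1 - p := by rw [← hP1, ← Finset.sum_compl_add_sum A]; ring
  have hQc : ∑ x ∈ Aᶜ, Q x = 1 - q := by rw [← hQ1, ← Finset.sum_compl_add_sum A]; ring
  have hmass : ∀ B : Finset X, 0 < ∑ x ∈ B, P x → 0 < ∑ x ∈ B, Q x := fun B hB ↦ by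
    obtain ⟨x, hx, hPx⟩ := (Finset.sum_pos_iff_of_nonneg fun x _ ↦ hP0 x).1 hB
    exact (Finset.sum_pos_iff_of_nonneg fun x _ ↦ hQ0 x).2 ⟨x, hx, hac x hPx⟩
  have hbinary : 2 * (p - q) ^ 2 ≤ binaryKL p q := by
    have hPc0 := Finset.sum_nonneg fun x (_ : x ∈ Aᶜ) ↦ hP0 x
    have hQc0 := Finset.sum_nonneg fun x (_ : x ∈ Aᶜ) ↦ hQ0 x
    refine two_mul_sq_le_binaryKL (Finset.sum_nonneg fun x _ ↦ hP0 x) (by linarith)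
      (Finset.sum_nonneg fun x _ ↦ hQ0 x) (by linarith) (hmass A) fun hp ↦ ?_
    have := hmass Aᶜ (by linarith)
    linarith
  have hKL : binaryKL p q ≤ ∑ x, P x * Real.log (P x / Q x) := by
    rw [← Finset.sum_add_sum_compl A, binaryKL, ← hPc, ← hQc]
    exact add_le_add (A.sum_mul_log_div_sum_le (fun x _ ↦ hP0 x) (fun x _ ↦ hQ0 x) fun x _ ↦ hac x)
      (Aᶜ.sum_mul_log_div_sum_le (fun x _ ↦ hP0 x) (fun x _ ↦ hQ0 x) fun x _ ↦ hac x)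
  rw [Finset.sum_filter_of_ne fun x _ h ↦ (hP0 x).lt_of_ne' (left_ne_zero_of_mul h)]
  exact Real.abs_le_sqrt (by linarith)
end

section
/- KL-divergence bound for a reduced-order Markov model: let A be a finite alphabet, 1 ≤ D < n, and let P and Q be the D-Markov measures on A^n with the same initial distribution μ on A^D and stochastic kernels p and q respectively, where q(w,s) > 0 for every w ∈ A^D and s ∈ A. If κ ≥ 0 satisfies (p(w,s) − q(w,s)) / q(w,s) ≤ κ for all w ∈ A^D and s ∈ A, then D_KL(P‖Q) ≤ (n − D) · κ. -/
/-!
Since `P` and `Q` share the initial distribution, `P x / Q x` is a product of `n - D` ratios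
`p(w,s) / q(w,s)`, and `log t ≤ t - 1` bounds the logarithm of each by
`(p(w,s) - q(w,s)) / q(w,s) ≤ κ`. Hence `log (P x / Q x) ≤ (n - D) κ` wherever `P x > 0`, and
averaging against `P`, a probability measure (sum out the last letter, by induction on `n`),
gives the bound.
-/

/-- The `D`-Markov measure on `A^n` (sequences indexed by `Fin n`, `0`-indexed)
with initial distribution `μ` on words of length `D` and stochastic kernel `K`:
`P(x) = μ(x_0 … x_{D-1}) · ∏_{i=D}^{n-1} K((x_{i-D},…,x_{i-1}), x_i)`.
(Indices are reduced mod `n`, which is the identity in the relevant range.) -/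
def dMarkovMeasure {A : Type*} (D n : ℕ) (hn : 0 < n)
    (μ : (Fin D → A) → ℝ) (K : (Fin D → A) → A → ℝ) (x : Fin n → A) : ℝ :=
  μ (fun j => x ⟨(j : ℕ) % n, Nat.mod_lt _ hn⟩) *
    ∏ i ∈ Finset.Ico D n,
      K (fun j => x ⟨(i - D + (j : ℕ)) % n, Nat.mod_lt _ hn⟩)
        (x ⟨i % n, Nat.mod_lt _ hn⟩)

open Finset Real

theorem Fin.sum_fun_succ_snoc {A : Type*} [Fintype A] {n : ℕ} (f : (Fin (n + 1) → A) → ℝ) :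
    ∑ x, f x = ∑ y : Fin n → A, ∑ a, f (Fin.snoc y a) := by
  rw [← (Fin.snocEquiv fun _ => A).sum_comp, Fintype.sum_prod_type_right]
  rfl

theorem Real.log_prod_div_prod_le {ι : Type*} (s : Finset ι) {f g : ι → ℝ}
    (hf : ∀ i ∈ s, 0 < f i) (hg : ∀ i ∈ s, 0 < g i) {κ : ℝ}
    (hκ : ∀ i ∈ s, (f i - g i) / g i ≤ κ) :
    log ((∏ i ∈ s, f i) / ∏ i ∈ s, g i) ≤ #s * κ := by
  rw [← prod_div_distrib, log_prod fun i hi => (div_pos (hf i hi) (hg i hi)).ne']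
  refine (sum_le_card_nsmul _ _ κ fun i hi => ?_).trans_eq (nsmul_eq_mul _ _)
  calc log (f i / g i) ≤ f i / g i - 1 := log_le_sub_one_of_pos (div_pos (hf i hi) (hg i hi))
    _ = (f i - g i) / g i := by rw [sub_div, div_self (hg i hi).ne']
    _ ≤ κ := hκ i hi

theorem sum_filter_pos_mul_log_div_le {ι : Type*} (s : Finset ι) {P Q : ι → ℝ} {c : ℝ}
    (hP : ∀ x ∈ s, 0 ≤ P x) (hc : ∀ x ∈ s, 0 < P x → log (P x / Q x) ≤ c) :
    ∑ x ∈ s with 0 < P x, P x * log (P x / Q x) ≤ (∑ x ∈ s, P x) * c := by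
  calc ∑ x ∈ s with 0 < P x, P x * log (P x / Q x)
      ≤ ∑ x ∈ s with 0 < P x, P x * c := by
        refine sum_le_sum fun x hx => ?_
        rw [mem_filter] at hx
        exact mul_le_mul_of_nonneg_left (hc x hx.1 hx.2) hx.2.le
    _ = (∑ x ∈ s, P x) * c := by
        rw [← sum_mul, sum_filter_of_ne fun x hx hPx => (hP x hx).lt_of_ne' hPx]

section dMarkovMeasure

variable {A : Type*} {D n : ℕ} (hn : 0 < n) (μ : (Fin D → A) → ℝ) (K : (Fin D → A) → A → ℝ)

theorem dMarkovMeasure_nonneg (hμ0 : ∀ w, 0 ≤ μ w) (hK0 : ∀ w s, 0 ≤ K w s) (x : Fin n → A) :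
    0 ≤ dMarkovMeasure D n hn μ K x :=
  mul_nonneg (hμ0 _) (prod_nonneg fun _ _ => hK0 _ _)

theorem dMarkovMeasure_self (hD : 0 < D) (x : Fin D → A) :
    dMarkovMeasure D D hD μ K x = μ x := by
  rw [dMarkovMeasure, Ico_self, prod_empty, mul_one]
  congr with j
  exact congrArg x (Fin.ext (Nat.mod_eq_of_lt j.2))

theorem Fin.snoc_mk_mod_of_lt {a : A} (y : Fin n → A) {k : ℕ} (hk : k < n) :
    (Fin.snoc y a : Fin (n + 1) → A) ⟨k % (n + 1), Nat.mod_lt _ n.succ_pos⟩ =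
      y ⟨k % n, Nat.mod_lt _ hn⟩ := by
  have h : (⟨k % (n + 1), Nat.mod_lt _ n.succ_pos⟩ : Fin (n + 1)) =
      Fin.castSucc ⟨k % n, Nat.mod_lt _ hn⟩ := by
    ext
    simp [Nat.mod_eq_of_lt hk, Nat.mod_eq_of_lt (hk.trans n.lt_succ_self)]
  rw [h, Fin.snoc_castSucc]

theorem dMarkovMeasure_snoc (hDn : D ≤ n) (y : Fin n → A) (a : A) :
    dMarkovMeasure D (n + 1) n.succ_pos μ K (Fin.snoc y a) =
      dMarkovMeasure D n hn μ K y * K (fun j => y ⟨(n - D + j) % n, Nat.mod_lt _ hn⟩) a := by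
  have hlast : (⟨n % (n + 1), Nat.mod_lt _ n.succ_pos⟩ : Fin (n + 1)) = Fin.last n :=
    Fin.ext (Nat.mod_eq_of_lt n.lt_succ_self)
  rw [dMarkovMeasure, dMarkovMeasure, prod_Ico_succ_top hDn, ← mul_assoc, hlast, Fin.snoc_last]
  congr 1
  · congr 1
    · congr 1 with j
      exact Fin.snoc_mk_mod_of_lt hn y (by omega)
    · refine prod_congr rfl fun i hi => ?_
      rw [mem_Ico] at hi
      congr 1
      · funext j
        exact Fin.snoc_mk_mod_of_lt hn y (by omega)
      · exact Fin.snoc_mk_mod_of_lt hn y hi.2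
  · congr 1 with j
    exact Fin.snoc_mk_mod_of_lt hn y (by omega)

theorem sum_dMarkovMeasure_eq_one [Fintype A] (hD : 0 < D) (hμ1 : ∑ w, μ w = 1)
    (hK1 : ∀ w, ∑ s, K w s = 1) (hDn : D ≤ n) : ∑ x, dMarkovMeasure D n hn μ K x = 1 := by
  induction n, hDn using Nat.le_induction with
  | base => simp_rw [dMarkovMeasure_self, hμ1]
  | succ n hDn ih =>
    simp_rw [Fin.sum_fun_succ_snoc, dMarkovMeasure_snoc (hD.trans_le hDn) μ K hDn, ← mul_sum,
      hK1, mul_one]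
    exact ih (hD.trans_le hDn)

theorem log_dMarkovMeasure_div_le (p q : (Fin D → A) → A → ℝ) (hp0 : ∀ w s, 0 ≤ p w s)
    (hq0 : ∀ w s, 0 < q w s) {κ : ℝ} (hκ : ∀ w s, (p w s - q w s) / q w s ≤ κ) (hDn : D ≤ n)
    {x : Fin n → A} (hx : 0 < dMarkovMeasure D n hn μ p x) :
    log (dMarkovMeasure D n hn μ p x / dMarkovMeasure D n hn μ q x) ≤ ((n : ℝ) - D) * κ := by
  obtain ⟨hμx, hpx⟩ := mul_ne_zero_iff.mp hx.ne'
  rw [dMarkovMeasure, dMarkovMeasure, mul_div_mul_left _ _ hμx, ← Nat.cast_sub hDn,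
    ← Nat.card_Ico]
  exact log_prod_div_prod_le _ (fun i hi => (hp0 _ _).lt_of_ne' (prod_ne_zero_iff.mp hpx i hi))
    (fun _ _ => hq0 _ _) (fun _ _ => hκ _ _)

end dMarkovMeasure

theorem dMarkov_klDiv_le_of_rel_dev_le_general {A : Type*} [Fintype A] (D n : ℕ)
    (hD : 1 ≤ D) (hDn : D < n)
    (μ : (Fin D → A) → ℝ) (p q : (Fin D → A) → A → ℝ)
    (hμ0 : ∀ w, 0 ≤ μ w) (hμ1 : ∑ w, μ w = 1)
    (hp0 : ∀ w s, 0 ≤ p w s) (hp1 : ∀ w, ∑ s, p w s = 1)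
    (hq0 : ∀ w s, 0 < q w s)
    (κ : ℝ)
    (hκ : ∀ w s, (p w s - q w s) / q w s ≤ κ) :
    (∑ x ∈ Finset.univ.filter
        (fun x : Fin n → A =>
          0 < dMarkovMeasure D n (Nat.lt_of_le_of_lt (Nat.zero_le D) hDn) μ p x),
        dMarkovMeasure D n (Nat.lt_of_le_of_lt (Nat.zero_le D) hDn) μ p x *
          Real.log
            (dMarkovMeasure D n (Nat.lt_of_le_of_lt (Nat.zero_le D) hDn) μ p x /
             dMarkovMeasure D n (Nat.lt_of_le_of_lt (Nat.zero_le D) hDn) μ q x)) ≤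
      ((n : ℝ) - (D : ℝ)) * κ := by
  have hn := Nat.lt_of_le_of_lt (Nat.zero_le D) hDn
  calc _ ≤ (∑ x, dMarkovMeasure D n hn μ p x) * (((n : ℝ) - D) * κ) :=
        sum_filter_pos_mul_log_div_le _ (fun x _ => dMarkovMeasure_nonneg hn μ p hμ0 hp0 x)
          (fun _ _ hx => log_dMarkovMeasure_div_le hn μ p q hp0 hq0 hκ hDn.le hx)
    _ = ((n : ℝ) - D) * κ := by rw [sum_dMarkovMeasure_eq_one hn μ p hD hμ1 hp1 hDn.le, one_mul]

/-- **KL-divergence bound for a reduced-order Markov model.** If `P` and `Q` are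
`D`-Markov measures on `A^n` with the same initial distribution `μ` and kernels
`p`, `q` respectively (`q` strictly positive), and `κ ≥ 0` satisfies
`(p(w,s) − q(w,s))/q(w,s) ≤ κ` for all words `w` and symbols `s`, then
`D_KL(P‖Q) ≤ (n − D) · κ`. -/
theorem dMarkov_klDiv_le_of_rel_dev_le {A : Type*} [Fintype A] (D n : ℕ)
    (hD : 1 ≤ D) (hDn : D < n)
    (μ : (Fin D → A) → ℝ) (p q : (Fin D → A) → A → ℝ)
    (hμ0 : ∀ w, 0 ≤ μ w) (hμ1 : ∑ w, μ w = 1)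
    (hp0 : ∀ w s, 0 ≤ p w s) (hp1 : ∀ w, ∑ s, p w s = 1)
    (hq0 : ∀ w s, 0 < q w s) (hq1 : ∀ w, ∑ s, q w s = 1)
    (κ : ℝ) (hκ0 : 0 ≤ κ)
    (hκ : ∀ w s, (p w s - q w s) / q w s ≤ κ) :
    (∑ x ∈ Finset.univ.filter
        (fun x : Fin n → A =>
          0 < dMarkovMeasure D n (Nat.lt_of_le_of_lt (Nat.zero_le D) hDn) μ p x),
        dMarkovMeasure D n (Nat.lt_of_le_of_lt (Nat.zero_le D) hDn) μ p x *
          Real.log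
            (dMarkovMeasure D n (Nat.lt_of_le_of_lt (Nat.zero_le D) hDn) μ p x /
             dMarkovMeasure D n (Nat.lt_of_le_of_lt (Nat.zero_le D) hDn) μ q x)) ≤
      ((n : ℝ) - (D : ℝ)) * κ :=
  dMarkov_klDiv_le_of_rel_dev_le_general D n hD hDn μ p q hμ0 hμ1 hp0 hp1 hq0 κ hκ
end
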